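/- Let a₄(x,y) = x⁴ + (4ξ − 2)x²y² + y⁴ with ξ = exp(2πi/6), and b₆(x,y) = x⁵y − xy⁵. Then a₄ and b₆ are algebraically independent over ℂ, and up to a nonzero multiplicative constant b₆ equals the Jacobian determinant of the pair (a₄, Hess(a₄)), where Hess(a₄) is the Hessian determinant of a₄. -/

import Mathlib

open MvPolynomial

/-- `a₄(x,y) = x⁴ + (4ξ − 2)x²y² + y⁴`, where `ξ = exp(2πi/6)`. -/
noncomputable def a4 : MvPolynomial (Fin 2) ℂ :=
  X 0 ^ 4 + C (4 * Complex.exp (2 * Real.pi * Complex.I / 6) - 2) * X 0 ^ 2 * X 1 ^ 2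
    + X 1 ^ 4

/-- `b₆(x,y) = x⁵y − xy⁵`. -/
noncomputable def b6 : MvPolynomial (Fin 2) ℂ := X 0 ^ 5 * X 1 - X 0 * X 1 ^ 5

/-- The Hessian determinant `F_{xx}F_{yy} − F_{xy}²` of a polynomial in two variables. -/
noncomputable def hess (F : MvPolynomial (Fin 2) ℂ) : MvPolynomial (Fin 2) ℂ :=
  pderiv 0 (pderiv 0 F) * pderiv 1 (pderiv 1 F) - (pderiv 0 (pderiv 1 F)) ^ 2

/-- The Jacobian determinant `F_x G_y − F_y G_x` of a pair of polynomials. -/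
noncomputable def jac (F G : MvPolynomial (Fin 2) ℂ) : MvPolynomial (Fin 2) ℂ :=
  pderiv 0 F * pderiv 1 G - pderiv 1 F * pderiv 0 G

/-!
Since `ξ² = ξ − 1`, the middle coefficient `α = 4ξ − 2` satisfies `α² = −12`. For the quartic
`x⁴ + a x²y² + y⁴` a direct computation gives `Jac(F, Hess F) = (1152 − 288 a²) b₆`, which is
`4608 b₆` at `a = α`.

Algebraic independence follows from the Jacobian criterion: if `P(f, g) = 0` with `P` of minimal
total degree, the chain rule gives `(∂ₓP)(f, g) f_x + (∂_yP)(f, g) g_x = 0` and the analogous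
identity in `y`; as `Jac(f, g) ≠ 0`, both `(∂ᵢP)(f, g)` vanish, so by minimality `∂ᵢP = 0`, and in
characteristic zero `P` is a constant, hence zero. Here `Jac(a₄, b₆)` is `4` at `(1, 0)`.
-/

namespace MvPolynomial

variable {R σ : Type*}

theorem pderiv_ofNat [CommSemiring R] (i : σ) (n : ℕ) [n.AtLeastTwo] :
    pderiv i (ofNat(n) : MvPolynomial σ R) = 0 := by
  simpa only [Nat.cast_ofNat] using (pderiv i).map_natCast (OfNat.ofNat n : ℕ)

variable [CommRing R] {i : σ} {P : MvPolynomial σ R}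

theorem totalDegree_pderiv_lt (h : pderiv i P ≠ 0) :
    (pderiv i P).totalDegree < P.totalDegree := by
  obtain ⟨t, ht, hdeg⟩ := Finset.exists_mem_eq_sup _ (support_nonempty.mpr h)
    fun s : σ →₀ ℕ => s.sum fun _ e => e
  have hmem : t + Finsupp.single i 1 ∈ P.support := by
    rw [mem_support_iff] at ht ⊢
    exact left_ne_zero_of_mul (coeff_pderiv (i := i) P t ▸ ht)
  calc (pderiv i P).totalDegree < (t + Finsupp.single i 1).sum fun _ e => e := by
        rw [totalDegree, hdeg, Finsupp.sum_add_index' (fun _ => rfl) (fun _ _ _ => rfl),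
          Finsupp.sum_single_index rfl]
        omega
    _ ≤ P.totalDegree := le_totalDegree hmem

theorem eq_C_of_forall_pderiv_eq_zero [IsDomain R] [CharZero R] (h : ∀ i, pderiv i P = 0) :
    P = C (coeff 0 P) := by
  refine totalDegree_eq_zero_iff_eq_C.mp <| (totalDegree_eq_zero_iff σ P).mpr fun m hm j => ?_
  by_contra hj
  have hle : Finsupp.single j 1 ≤ m := Finsupp.single_le_iff.mpr (Nat.one_le_iff_ne_zero.mpr hj)
  have hcoeff := coeff_pderiv (i := j) P (m - Finsupp.single j 1)
  rw [h j, tsub_add_cancel_of_le hle, coeff_zero, eq_comm] at hcoeff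
  exact mul_ne_zero (mem_support_iff.mp hm) (Nat.cast_add_one_ne_zero _) hcoeff

theorem pderiv_aeval {τ : Type*} [Fintype τ] (f : τ → MvPolynomial σ R) (i : σ)
    (Q : MvPolynomial τ R) :
    pderiv i (aeval f Q) = ∑ j, aeval f (pderiv j Q) * pderiv i (f j) := by
  classical
  induction Q using MvPolynomial.induction_on with
  | C a => simp
  | add p q hp hq => simp only [map_add, hp, hq, add_mul, Finset.sum_add_distrib]
  | mul_X p j hp =>
    simp only [map_mul, aeval_X, pderiv_mul, hp, map_add, pderiv_X, Finset.sum_mul, add_mul,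
      Finset.sum_add_distrib]
    simp [Pi.single_apply, mul_right_comm]

end MvPolynomial

theorem IsPrimitiveRoot.four_mul_sub_two_sq {R : Type*} [CommRing R] [IsDomain R] {ξ : R}
    (hξ : IsPrimitiveRoot ξ 6) : (4 * ξ - 2) ^ 2 = -12 := by
  have h := hξ.isRoot_cyclotomic (by norm_num)
  rw [Polynomial.cyclotomic_six, Polynomial.IsRoot.def] at h
  simp only [Polynomial.eval_add, Polynomial.eval_sub, Polynomial.eval_pow, Polynomial.eval_X,
    Polynomial.eval_one] at h
  linear_combination 16 * h

section Jacobian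

variable {f g : MvPolynomial (Fin 2) ℂ}

theorem eq_zero_of_jac_ne_zero (hJ : jac f g ≠ 0) {u v : MvPolynomial (Fin 2) ℂ}
    (h0 : u * pderiv 0 f + v * pderiv 0 g = 0) (h1 : u * pderiv 1 f + v * pderiv 1 g = 0) :
    u = 0 ∧ v = 0 := by
  unfold jac at hJ
  constructor
  · refine (mul_eq_zero.mp ?_).resolve_right hJ
    linear_combination pderiv 1 g * h0 - pderiv 0 g * h1
  · refine (mul_eq_zero.mp ?_).resolve_right hJ
    linear_combination pderiv 0 f * h1 - pderiv 1 f * h0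

theorem aeval_pderiv_eq_zero_of_jac_ne_zero (hJ : jac f g ≠ 0) {P : MvPolynomial (Fin 2) ℂ}
    (hP : aeval ![f, g] P = 0) (j : Fin 2) : aeval ![f, g] (pderiv j P) = 0 := by
  have hchain : ∀ i, aeval ![f, g] (pderiv 0 P) * pderiv i f +
      aeval ![f, g] (pderiv 1 P) * pderiv i g = 0 := fun i => by
    have hi := pderiv_aeval ![f, g] i P
    rw [hP, map_zero, Fin.sum_univ_two] at hi
    exact hi.symm
  obtain ⟨h0, h1⟩ := eq_zero_of_jac_ne_zero hJ (hchain 0) (hchain 1)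
  fin_cases j
  exacts [h0, h1]

theorem algebraicIndependent_of_jac_ne_zero (hJ : jac f g ≠ 0) :
    AlgebraicIndependent ℂ ![f, g] := by
  rw [algebraicIndependent_iff]
  intro P
  induction hn : P.totalDegree using Nat.strong_induction_on generalizing P with
  | _ n ih =>
  intro hP
  have hderiv : ∀ j, pderiv j P = 0 := fun j => by
    by_contra hne
    exact hne <| ih _ (hn ▸ totalDegree_pderiv_lt hne) _ rfl
      (aeval_pderiv_eq_zero_of_jac_ne_zero hJ hP j)
  rw [eq_C_of_forall_pderiv_eq_zero hderiv] at hP ⊢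
  simpa using hP

end Jacobian

noncomputable def quartic (a : ℂ) : MvPolynomial (Fin 2) ℂ :=
  X 0 ^ 4 + C a * X 0 ^ 2 * X 1 ^ 2 + X 1 ^ 4

theorem jac_quartic_hess (a : ℂ) :
    jac (quartic a) (hess (quartic a)) = C (1152 - 288 * a ^ 2) * b6 := by
  simp only [jac, hess, quartic, b6, map_add, map_sub, Derivation.leibniz_pow,
    Derivation.leibniz, derivation_C, pderiv_ofNat, pderiv_X, Pi.single_eq_same,
    Pi.single_eq_of_ne, ne_eq, one_ne_zero, zero_ne_one, not_false_eq_true, Nat.add_one_sub_one,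
    pow_one, smul_eq_mul, nsmul_eq_mul, Nat.cast_ofNat, mul_one, mul_zero, add_zero,
    zero_add, C_mul, C_pow, map_ofNat]
  ring

theorem jac_quartic_b6_ne_zero (a : ℂ) : jac (quartic a) b6 ≠ 0 := fun h => by
  simpa [jac, quartic, b6, pderiv_ofNat, pderiv_X] using congrArg (eval ![1, 0]) h

/-- `a₄` and `b₆` are algebraically independent over `ℂ`, and up to a nonzero
multiplicative constant `b₆` equals the Jacobian of `(a₄, Hess(a₄))`. -/
theorem stmt_18 :
    AlgebraicIndependent ℂ ![a4, b6] ∧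
      ∃ c : ℂ, c ≠ 0 ∧ jac a4 (hess a4) = C c * b6 := by
  have ha4 : a4 = quartic (4 * Complex.exp (2 * Real.pi * Complex.I / 6) - 2) := rfl
  have hξ : IsPrimitiveRoot (Complex.exp (2 * Real.pi * Complex.I / 6)) 6 := by
    simpa using Complex.isPrimitiveRoot_exp 6 (by norm_num)
  refine ⟨ha4 ▸ algebraicIndependent_of_jac_ne_zero (jac_quartic_b6_ne_zero _), 4608,
    by norm_num, ?_⟩
  rw [ha4, jac_quartic_hess, hξ.four_mul_sub_two_sq]
  norm_num
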